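/- Let T ⊆ ℝ²≥0 be the triangle with vertices (4,0), (10,0), (7,3) and 𝔗 = ⋃_{i∈ℕ} (i·T) ∩ ℕ². With n₁ = (7,3) and n₂ = (4,0), the set Ap(n₁) ∩ Ap(n₂) equals {(0,0),(5,0),(6,0),(7,0),(5,1),(6,1),(7,1),(8,1),(6,2),(7,2),(8,2),(13,2)}, where Ap(n) = {s ∈ 𝔗 : s − n ∉ 𝔗}. -/

import Mathlib

/-!
A lattice point `(x, y)` lies in the layer `i • T` iff `0 ≤ y` and `4 i ≤ x - y`, `x + y ≤ 10 i`.
If `s = (x, y)` lies in layer `i + 1` and `y ≥ 3`, then `s - (7, 3)` lies in layer `i`, so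
`Ap((7,3))` forces `y ≤ 2`. Likewise `s - (4, 0)` lies in layer `i` or `i + 1` unless
`x + y > 10 i + 4` and `x - y < 4 i + 8`; with `y ≤ 2` these force `i ≤ 1`, which leaves
finitely many candidates, checked one by one.
-/

open scoped Pointwise

def toQ (p : ℤ × ℤ) : ℚ × ℚ := ((p.1 : ℚ), (p.2 : ℚ))
def toR (p : ℤ × ℤ) : ℝ × ℝ := ((p.1 : ℝ), (p.2 : ℝ))
def isNat (p : ℤ × ℤ) : Prop := 0 ≤ p.1 ∧ 0 ≤ p.2
def inCone (n₁ n₂ a : ℤ × ℤ) : Prop :=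
  ∃ q₁ q₂ : ℚ, 0 ≤ q₁ ∧ 0 ≤ q₂ ∧ toQ a = q₁ • toQ n₁ + q₂ • toQ n₂
def onRay (n a : ℤ × ℤ) : Prop := ∃ q : ℚ, 0 ≤ q ∧ toQ a = q • toQ n


/-- The triangle with vertices `(4,0)`, `(10,0)`, `(7,3)`. -/
def tri3 : Set (ℝ × ℝ) :=
  convexHull ℝ {((4 : ℝ), (0 : ℝ)), ((10 : ℝ), (0 : ℝ)), ((7 : ℝ), (3 : ℝ))}

def triSem3 : Set (ℤ × ℤ) :=
  {a : ℤ × ℤ | a = 0 ∨ ∃ i : ℕ, toR a ∈ (i : ℝ) • tri3}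

def ap3 (n : ℤ × ℤ) : Set (ℤ × ℤ) :=
  {s : ℤ × ℤ | s ∈ triSem3 ∧ s - n ∉ triSem3}

lemma tri3_eq : tri3 = {p : ℝ × ℝ | 0 ≤ p.2 ∧ 4 ≤ p.1 - p.2 ∧ p.1 + p.2 ≤ 10} := by
  apply Set.Subset.antisymm
  · apply convexHull_min
    · rintro p (rfl | rfl | rfl) <;> norm_num
    · rintro ⟨x₁, y₁⟩ ⟨h₁, h₂, h₃⟩ ⟨x₂, y₂⟩ ⟨h₄, h₅, h₆⟩ a b ha hb hab
      simp only [Prod.smul_mk, Prod.mk_add_mk, smul_eq_mul, Set.mem_ofPred_eq] at *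
      refine ⟨by positivity, ?_, ?_⟩ <;> nlinarith
  · rintro ⟨x, y⟩ ⟨h₁, h₂, h₃⟩
    -- barycentric coordinates of `(x, y)`
    apply mem_convexHull_of_exists_fintype (ι := Fin 3)
      ![(10 - x - y) / 6, (x - y - 4) / 6, y / 3]
      ![((4 : ℝ), (0 : ℝ)), ((10 : ℝ), (0 : ℝ)), ((7 : ℝ), (3 : ℝ))]
    · intro i; fin_cases i <;> simp <;> linarith
    · simp [Fin.sum_univ_three]; ring
    · intro i; fin_cases i <;> simp
    · simp [Fin.sum_univ_three, Prod.ext_iff, Prod.smul_mk]; ring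

lemma mem_smul_tri3_iff {c : ℝ} (hc : 0 ≤ c) (p : ℝ × ℝ) :
    p ∈ c • tri3 ↔ 0 ≤ p.2 ∧ 4 * c ≤ p.1 - p.2 ∧ p.1 + p.2 ≤ 10 * c := by
  rcases hc.eq_or_lt with rfl | hc
  · have : tri3.Nonempty := ⟨(4, 0), subset_convexHull ℝ _ (by simp)⟩
    rw [Set.zero_smul_set this, Set.mem_zero, Prod.ext_iff]
    constructor
    · rintro ⟨h₁, h₂⟩; simp [h₁, h₂]
    · rintro ⟨h₁, h₂, h₃⟩; constructor <;> simp <;> linarith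
  · rw [Set.mem_smul_set_iff_inv_smul_mem₀ hc.ne', tri3_eq]
    simp only [Set.mem_ofPred_eq, Prod.smul_fst, Prod.smul_snd, smul_eq_mul, ← mul_sub, ← mul_add,
      le_inv_mul_iff₀ hc, inv_mul_le_iff₀ hc, mul_comm c, zero_mul]

lemma mem_triSem3_iff (a : ℤ × ℤ) :
    a ∈ triSem3 ↔ ∃ i : ℕ, 0 ≤ a.2 ∧ 4 * i ≤ a.1 - a.2 ∧ a.1 + a.2 ≤ 10 * i := by
  have hcast (i : ℕ) : toR a ∈ (i : ℝ) • tri3 ↔ 0 ≤ a.2 ∧ 4 * i ≤ a.1 - a.2 ∧ a.1 + a.2 ≤ 10 * i := by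
    rw [mem_smul_tri3_iff i.cast_nonneg]
    dsimp only [toR]
    norm_cast
  simp only [triSem3, Set.mem_ofPred_eq, hcast]
  constructor
  · rintro (rfl | h)
    · exact ⟨0, by simp⟩
    · exact h
  · exact Or.inr

-- The paper's test `⌈d(P)/d(B)⌉ ≤ d(P)/d(A)`, in a form that `decide` evaluates.
lemma mem_triSem3_iff_ediv (a : ℤ × ℤ) :
    a ∈ triSem3 ↔ 0 ≤ a.2 ∧ 0 ≤ a.1 - a.2 ∧ a.1 + a.2 ≤ 10 * ((a.1 - a.2) / 4) := by
  rw [mem_triSem3_iff]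
  constructor
  · rintro ⟨i, h₀, h₁, h₂⟩
    omega
  · rintro ⟨h₀, h₁, h₂⟩
    exact ⟨((a.1 - a.2) / 4).toNat, h₀, by omega, by omega⟩

lemma snd_le_two_of_mem_ap3 {x y : ℤ} (h : (x, y) ∈ ap3 (7, 3)) : y ≤ 2 := by
  obtain ⟨hmem, hsub⟩ := h
  rw [mem_triSem3_iff] at hmem hsub
  obtain ⟨_ | k, hy, h₁, h₂⟩ := hmem
  · omega
  · by_contra! hy3
    exact hsub ⟨k, by simp; omega⟩

lemma eq_zero_or_layer_of_mem_ap3 {x y : ℤ} (h : (x, y) ∈ ap3 (4, 0)) :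
    (x, y) = 0 ∨ ∃ k : ℕ, 0 ≤ y ∧ 4 * k + 4 ≤ x - y ∧ x - y < 4 * k + 8 ∧
      10 * k + 4 < x + y ∧ x + y ≤ 10 * k + 10 := by
  obtain ⟨hmem, hsub⟩ := h
  rw [mem_triSem3_iff] at hmem hsub
  obtain ⟨_ | k, hy, h₁, h₂⟩ := hmem
  · left; simp only [Prod.mk_eq_zero]; omega
  · right
    refine ⟨k, hy, by omega, ?_, ?_, by omega⟩ <;> by_contra!
    · exact hsub ⟨k + 1, by simp; omega⟩
    · exact hsub ⟨k, by simp; omega⟩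

/-- Figure 4 example: `Ap((7,3)) ∩ Ap((4,0))` computed explicitly. -/
theorem stmt14 :
    ap3 ((7 : ℤ), (3 : ℤ)) ∩ ap3 ((4 : ℤ), (0 : ℤ)) =
      ({((0 : ℤ), (0 : ℤ)), (5, 0), (6, 0), (7, 0),
        (5, 1), (6, 1), (7, 1), (8, 1),
        (6, 2), (7, 2), (8, 2), (13, 2)} : Set (ℤ × ℤ)) := by
  ext ⟨x, y⟩
  simp only [Set.mem_insert_iff, Set.mem_singleton_iff, Prod.mk.injEq]
  constructor
  · rintro ⟨h₇₃, h₄₀⟩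
    have hy := snd_le_two_of_mem_ap3 h₇₃
    rcases eq_zero_or_layer_of_mem_ap3 h₄₀ with h₀ | ⟨k, h₁, h₂, h₃, h₄, h₅⟩
    · simp_all
    · have hk : k ≤ 1 := by omega
      interval_cases k <;> omega
  · rintro (⟨rfl, rfl⟩ | ⟨rfl, rfl⟩ | ⟨rfl, rfl⟩ | ⟨rfl, rfl⟩ | ⟨rfl, rfl⟩ | ⟨rfl, rfl⟩ |
      ⟨rfl, rfl⟩ | ⟨rfl, rfl⟩ | ⟨rfl, rfl⟩ | ⟨rfl, rfl⟩ | ⟨rfl, rfl⟩ | ⟨rfl, rfl⟩) <;>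
    simp only [ap3, Set.mem_inter_iff, Set.mem_ofPred_eq, Prod.mk_sub_mk, mem_triSem3_iff_ediv] <;>
    decide
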